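/- Let (X, d_X) be a finite pseudometric space and let m be an irreducible and aperiodic transition kernel on X, with cost C(x,x') = d_X(x,x'). Then there exist t₀ ∈ ℕ with t₀ ≥ 1 and ε ∈ (0,1], depending only on m, such that for all initial distributions ν₁, ν₂ ∈ 𝒫(X) and all k ∈ ℕ, d_WL^{(k)}((X, m, ν₁), (X, m, ν₂); C) ≤ (1−ε)^{⌊k/t₀⌋} · ‖C‖_∞. In particular, lim_{k→∞} d_WL^{(k)}((X, m, ν₁), (X, m, ν₂); C) = 0. -/

import Mathlib

open scoped BigOperators
open Filter Topology

/-- A probability vector on a finite type. -/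
def IsProb {X : Type*} [Fintype X] (ν : X → ℝ) : Prop :=
  (∀ x, 0 ≤ ν x) ∧ ∑ x, ν x = 1

/-- `μ` is a coupling of `α` and `β`. -/
def IsCoupling {X Y : Type*} [Fintype X] [Fintype Y]
    (μ : X × Y → ℝ) (α : X → ℝ) (β : Y → ℝ) : Prop :=
  (∀ z, 0 ≤ μ z) ∧ (∀ x, ∑ y, μ (x, y) = α x) ∧ (∀ y, ∑ x, μ (x, y) = β y)

/-- A finite Markov chain: a transition kernel together with an initial distribution. -/
structure MarkovChain (X : Type*) [Fintype X] where
  kernel : X → X → ℝ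
  init : X → ℝ
  kernel_prob : ∀ x, IsProb (kernel x)
  init_prob : IsProb init

/-- A Markovian coupling between two finite Markov chains.  `trans t` is the
transition coupling used from time `t` to time `t+1` (i.e. `m^{(t+1)}`). -/
structure MarkovCoupling {X Y : Type*} [Fintype X] [Fintype Y]
    (MX : MarkovChain X) (MY : MarkovChain Y) where
  init : X × Y → ℝ
  trans : ℕ → X × Y → X × Y → ℝ
  init_coupling : IsCoupling init MX.init MY.init
  trans_coupling : ∀ t xy, IsCoupling (trans t xy) (MX.kernel xy.1) (MY.kernel xy.2)

/-- Time-`t` law determined by an initial distribution and step kernels. -/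
noncomputable def lawAux {X Y : Type*} [Fintype X] [Fintype Y]
    (ν : X × Y → ℝ) (m : ℕ → X × Y → X × Y → ℝ) : ℕ → X × Y → ℝ
  | 0 => ν
  | t + 1 => fun z => ∑ w : X × Y, m t w z * lawAux ν m t w

/-- The time-`t` law of a Markovian coupling. -/
noncomputable def MarkovCoupling.law {X Y : Type*} [Fintype X] [Fintype Y]
    {MX : MarkovChain X} {MY : MarkovChain Y} (π : MarkovCoupling MX MY) :
    ℕ → X × Y → ℝ :=
  lawAux π.init π.trans

/-- `p` is a probability distribution on `ℕ`. -/
def IsProbNat (p : ℕ → ℝ) : Prop := (∀ t, 0 ≤ p t) ∧ HasSum p 1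

/-- The Optimal Transport Markov (OTM) distance associated to `p`. -/
noncomputable def dOTM {X Y : Type*} [Fintype X] [Fintype Y] (p : ℕ → ℝ)
    (MX : MarkovChain X) (MY : MarkovChain Y) (C : X × Y → ℝ) : ℝ :=
  ⨅ π : MarkovCoupling MX MY, ∑' t, p t * ∑ z : X × Y, C z * π.law t z

/-- The Dirac mass at `k` on `ℕ`. -/
noncomputable def diracN (k : ℕ) : ℕ → ℝ := fun t => if t = k then 1 else 0

/-- The depth-`k` WL distance, `d_WL^{(k)} = d_OTM^{δ_k}`. -/
noncomputable def dWL {X Y : Type*} [Fintype X] [Fintype Y] (k : ℕ)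
    (MX : MarkovChain X) (MY : MarkovChain Y) (C : X × Y → ℝ) : ℝ :=
  dOTM (diracN k) MX MY C

/-- `d` is a pseudometric on `X`. -/
def IsPseudometric {X : Type*} (d : X → X → ℝ) : Prop :=
  (∀ x y, 0 ≤ d x y) ∧ (∀ x, d x x = 0) ∧ (∀ x y, d x y = d y x) ∧
  (∀ x y z, d x z ≤ d x y + d y z)

/-- The `t`-step transition kernel. -/
noncomputable def kpow {X : Type*} [Fintype X] [DecidableEq X]
    (m : X → X → ℝ) : ℕ → X → X → ℝ
  | 0 => fun x x' => if x = x' then 1 else 0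
  | t + 1 => fun x x' => ∑ y, m x y * kpow m t y x'

/-- A transition kernel is irreducible if every state can reach every state in
some positive finite number of steps. -/
def KernelIrreducible {X : Type*} [Fintype X] [DecidableEq X] (m : X → X → ℝ) : Prop :=
  ∀ x x', ∃ t, 1 ≤ t ∧ 0 < kpow m t x x'

/-- A transition kernel is aperiodic if for every state the gcd of its return
times is `1` (i.e. every common divisor of the return times is `1`). -/
def KernelAperiodic {X : Type*} [Fintype X] [DecidableEq X] (m : X → X → ℝ) : Prop :=
  ∀ x, ∀ d : ℕ, (∀ t, 1 ≤ t → 0 < kpow m t x x → d ∣ t) → d = 1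

/-- `μ` is stationary for the transition kernel `m`. -/
def IsStationaryFor {X : Type*} [Fintype X] (m : X → X → ℝ) (μ : X → ℝ) : Prop :=
  ∀ x', ∑ x, m x x' * μ x = μ x'

/-- The entrywise supremum norm. -/
noncomputable def supNorm {Z : Type*} [Fintype Z] (C : Z → ℝ) : ℝ := ⨆ z, |C z|

/-!
Run two copies of the chain, from `ν₁` and from `ν₂`, under the sticky coupling: independently
until they meet, together afterwards. Since the cost vanishes on the diagonal, the cost at time
`k` is at most `‖C‖_∞` times the probability that the copies are still apart. Irreducibility
and aperiodicity make some power `m^{t₀}` entrywise positive, so two independent copies started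
anywhere are at the same state at time `t₀` with probability bounded away from `0`. The sticky
copies are apart no more often than independent ones, so each block of `t₀` steps multiplies
the probability of being apart by at most some `1 - ε < 1`.
-/

open Matrix
open scoped Kronecker

namespace Matrix

section OrderedSemiring

variable {R m n : Type*} [CommSemiring R]

lemma kronecker_pow [Fintype m] [Fintype n] [DecidableEq m] [DecidableEq n] (A : Matrix m m R)
    (B : Matrix n n R) (t : ℕ) : (A ⊗ₖ B) ^ t = (A ^ t) ⊗ₖ (B ^ t) := by
  induction t with
  | zero => simp
  | succ t ih => rw [pow_succ, pow_succ, pow_succ, ih, mul_kronecker_mul]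

variable [PartialOrder R] [IsOrderedRing R]

lemma mulVec_mono [Fintype n] {A : Matrix m n R} (hA : ∀ i j, 0 ≤ A i j) {f g : n → R}
    (h : f ≤ g) : A *ᵥ f ≤ A *ᵥ g :=
  fun i => dotProduct_le_dotProduct_of_nonneg_left h (hA i)

variable [Fintype n] [DecidableEq n]

lemma pow_mulVec_le_pow_smul {A : Matrix n n R} (hA : ∀ i j, 0 ≤ A i j) {f : n → R} {c : R}
    (hc : 0 ≤ c) (h : A *ᵥ f ≤ c • f) (j : ℕ) : A ^ j *ᵥ f ≤ c ^ j • f := by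
  induction j with
  | zero => simp
  | succ j ih =>
    calc A ^ (j + 1) *ᵥ f = A ^ j *ᵥ (A *ᵥ f) := by rw [pow_succ, mulVec_mulVec]
      _ ≤ A ^ j *ᵥ (c • f) := mulVec_mono (pow_apply_nonneg hA j) h
      _ = c • (A ^ j *ᵥ f) := mulVec_smul _ _ _
      _ ≤ c • (c ^ j • f) := smul_le_smul_of_nonneg_left ih hc
      _ = c ^ (j + 1) • f := by rw [smul_smul, pow_succ']

lemma pow_mulVec_le_pow_div_smul {A : Matrix n n R} (hA : ∀ i j, 0 ≤ A i j) {f : n → R}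
    (hf : A *ᵥ f ≤ f) {t : ℕ} {c : R} (hc : 0 ≤ c) (ht : A ^ t *ᵥ f ≤ c • f)
    (k : ℕ) : A ^ k *ᵥ f ≤ c ^ (k / t) • f := by
  have hk : A ^ k = A ^ (k % t) * (A ^ t) ^ (k / t) := by
    rw [← pow_mul, ← pow_add, Nat.mod_add_div]
  calc A ^ k *ᵥ f = A ^ (k % t) *ᵥ ((A ^ t) ^ (k / t) *ᵥ f) := by rw [hk, mulVec_mulVec]
    _ ≤ A ^ (k % t) *ᵥ (c ^ (k / t) • f) :=
      mulVec_mono (pow_apply_nonneg hA _)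
        (pow_mulVec_le_pow_smul (pow_apply_nonneg hA t) hc ht _)
    _ = c ^ (k / t) • (A ^ (k % t) *ᵥ f) := mulVec_smul _ _ _
    _ ≤ c ^ (k / t) • f := by
      refine smul_le_smul_of_nonneg_left ?_ (pow_nonneg hc _)
      simpa using pow_mulVec_le_pow_smul hA zero_le_one (by simpa using hf) (k % t)

lemma kronecker_mem_rowStochastic [Fintype m] [DecidableEq m] {A : Matrix m m R}
    {B : Matrix n n R} (hA : A ∈ rowStochastic R m) (hB : B ∈ rowStochastic R n) :
    A ⊗ₖ B ∈ rowStochastic R (m × n) := by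
  refine mem_rowStochastic_iff_sum.2 ⟨fun i j => mul_nonneg (nonneg_of_mem_rowStochastic hA)
    (nonneg_of_mem_rowStochastic hB), fun i => ?_⟩
  simp [Fintype.sum_prod_type, ← Finset.mul_sum, sum_row_of_mem_rowStochastic hA,
    sum_row_of_mem_rowStochastic hB]

end OrderedSemiring

section Primitive

variable {n : Type*} [Fintype n] [DecidableEq n]

lemma pow_add_apply_pos {A : Matrix n n ℝ} (hA : ∀ i j, 0 ≤ A i j) {a b : ℕ} {i j k : n}
    (ha : 0 < (A ^ a) i j) (hb : 0 < (A ^ b) j k) : 0 < (A ^ (a + b)) i k := by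
  rw [pow_add, mul_apply]
  refine (mul_pos ha hb).trans_le (Finset.single_le_sum (f := fun l => (A ^ a) i l * (A ^ b) l k)
    (fun l _ => mul_nonneg (pow_apply_nonneg hA a i l) (pow_apply_nonneg hA b l k))
    (Finset.mem_univ j))

/-- The return times to `i` form an additive submonoid of `ℕ` of gcd `1`, which contains all
large integers. -/
lemma eventually_pow_apply_self_pos {A : Matrix n n ℝ} (hA : ∀ i j, 0 ≤ A i j) {i : n}
    (haper : ∀ d : ℕ, (∀ t, 1 ≤ t → 0 < (A ^ t) i i → d ∣ t) → d = 1) :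
    ∀ᶠ t in atTop, 0 < (A ^ t) i i := by
  let returns : AddSubmonoid ℕ :=
    { carrier := {t | 0 < (A ^ t) i i}
      zero_mem' := by simp
      add_mem' := pow_add_apply_pos hA }
  let positiveReturns : Set ℕ := {t | 1 ≤ t ∧ 0 < (A ^ t) i i}
  have hgcd : Nat.setGcd positiveReturns = 1 :=
    haper _ fun t ht hpos => Nat.setGcd_dvd_of_mem ⟨ht, hpos⟩
  obtain ⟨N, hN⟩ := Nat.exists_mem_closure_of_ge positiveReturns
  filter_upwards [eventually_ge_atTop N] with t ht
  exact (AddSubmonoid.closure_le (S := returns)).2 (fun _ h => h.2)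
    (hN t ht (hgcd ▸ one_dvd t))

lemma IsIrreducible.isPrimitive_of_aperiodic {A : Matrix n n ℝ} (hirr : A.IsIrreducible)
    (haper : ∀ i, ∀ d : ℕ, (∀ t, 1 ≤ t → 0 < (A ^ t) i i → d ∣ t) → d = 1) :
    A.IsPrimitive := by
  have hpos : ∀ᶠ t in atTop, ∀ i j, 0 < (A ^ t) i j := by
    refine eventually_all.2 fun i => eventually_all.2 fun j => ?_
    obtain ⟨T, -, hT⟩ := (isIrreducible_iff_exists_pow_pos hirr.nonneg).1 hirr i j
    filter_upwards [(tendsto_sub_atTop_nat T).eventually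
      (eventually_pow_apply_self_pos hirr.nonneg (haper i)), eventually_ge_atTop T] with t ht hTt
    simpa [Nat.sub_add_cancel hTt] using pow_add_apply_pos hirr.nonneg ht hT
  obtain ⟨t, ht, hpos⟩ := (hpos.and (eventually_gt_atTop 0)).exists
  exact ⟨hirr.nonneg, t, hpos, ht⟩

end Primitive

end Matrix

section Kernel

variable {X : Type*} [Fintype X] [DecidableEq X]

lemma kpow_eq_pow (m : X → X → ℝ) (t : ℕ) : kpow m t = of m ^ t := by
  induction t with
  | zero => funext x y; simp [kpow, one_apply]
  | succ t ih => funext x y; simp [kpow, pow_succ', mul_apply, ih]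

lemma KernelIrreducible.isPrimitive {m : X → X → ℝ} (hirr : KernelIrreducible m)
    (haper : KernelAperiodic m) (hm : ∀ x y, 0 ≤ m x y) : (of m).IsPrimitive := by
  simp only [KernelIrreducible, KernelAperiodic, kpow_eq_pow] at hirr haper
  exact IsIrreducible.isPrimitive_of_aperiodic
    ((isIrreducible_iff_exists_pow_pos hm).2 fun x y => (hirr x y).imp fun _ h => h) haper

end Kernel

lemma exists_forall_le_of_forall_lt {ι : Type*} [Finite ι] {f : ι → ℝ} {a b : ℝ}
    (hba : b < a) (hf : ∀ i, f i < a) : ∃ c, b ≤ c ∧ c < a ∧ ∀ i, f i ≤ c := by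
  have hnhds : ∀ᶠ c in 𝓝 a, b ≤ c ∧ ∀ i, f i ≤ c :=
    (eventually_ge_nhds hba).and (eventually_all.2 fun i => eventually_ge_nhds (hf i))
  obtain ⟨c, ⟨hbc, hfc⟩, hca⟩ :=
    ((hnhds.filter_mono nhdsWithin_le_nhds).and (self_mem_nhdsWithin (s := Set.Iio a))).exists
  exact ⟨c, hbc, hca, hfc⟩

section StickyCoupling

variable {X : Type*} [DecidableEq X]

def offDiagIndicator : X × X → ℝ := fun z => if z.1 = z.2 then 0 else 1

@[simp]
lemma offDiagIndicator_self (x : X) : offDiagIndicator (x, x) = 0 := if_pos rfl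

lemma offDiagIndicator_nonneg : 0 ≤ (offDiagIndicator : X × X → ℝ) := by
  intro z; unfold offDiagIndicator; split_ifs <;> norm_num

lemma offDiagIndicator_le_one : (offDiagIndicator : X × X → ℝ) ≤ 1 := by
  intro z; unfold offDiagIndicator; split_ifs <;> norm_num

def stickyCoupling (M : Matrix X X ℝ) : Matrix (X × X) (X × X) ℝ :=
  of fun w z => if w.1 = w.2 then (if z.1 = z.2 then M w.1 z.1 else 0) else (M ⊗ₖ M) w z

variable {M : Matrix X X ℝ}

lemma stickyCoupling_apply_of_ne {w : X × X} (hw : w.1 ≠ w.2) (z : X × X) :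
    stickyCoupling M w z = (M ⊗ₖ M) w z := by
  simp [stickyCoupling, hw]

variable [Fintype X]

lemma isCoupling_stickyCoupling (hM : M ∈ rowStochastic ℝ X) (w : X × X) :
    IsCoupling (stickyCoupling M w) (M w.1) (M w.2) := by
  obtain ⟨a, b⟩ := w
  have hM0 : ∀ i j, 0 ≤ M i j := fun _ _ => nonneg_of_mem_rowStochastic hM
  by_cases hab : a = b
  · subst hab
    refine ⟨fun z => ?_, fun x => ?_, fun y => ?_⟩
    · simp only [stickyCoupling, of_apply, if_true]; split_ifs <;> simp [hM0]
    · simp [stickyCoupling, Finset.sum_ite_eq]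
    · simp [stickyCoupling, Finset.sum_ite_eq']
  · refine ⟨fun z => ?_, fun x => ?_, fun y => ?_⟩
    · simpa [stickyCoupling, hab] using mul_nonneg (hM0 a z.1) (hM0 b z.2)
    · simp [stickyCoupling, hab, ← Finset.mul_sum, sum_row_of_mem_rowStochastic hM]
    · simp [stickyCoupling, hab, ← Finset.sum_mul, sum_row_of_mem_rowStochastic hM]

lemma stickyCoupling_mem_rowStochastic (hM : M ∈ rowStochastic ℝ X) :
    stickyCoupling M ∈ rowStochastic ℝ (X × X) := by
  refine mem_rowStochastic_iff_sum.2 ⟨fun w => (isCoupling_stickyCoupling hM w).1, fun w => ?_⟩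
  simp [Fintype.sum_prod_type, (isCoupling_stickyCoupling hM w).2.1,
    sum_row_of_mem_rowStochastic hM]

lemma stickyCoupling_mulVec_offDiagIndicator_le (hM : M ∈ rowStochastic ℝ X) :
    stickyCoupling M *ᵥ offDiagIndicator ≤ offDiagIndicator := by
  rintro ⟨a, b⟩
  by_cases hab : a = b
  · subst hab
    refine (Finset.sum_eq_zero fun z _ => ?_).trans_le (offDiagIndicator_nonneg _)
    by_cases hz : z.1 = z.2 <;> simp [stickyCoupling, offDiagIndicator, hz]
  · calc (stickyCoupling M *ᵥ offDiagIndicator) (a, b)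
        ≤ (stickyCoupling M *ᵥ 1) (a, b) :=
          mulVec_mono
            (fun _ _ => nonneg_of_mem_rowStochastic (stickyCoupling_mem_rowStochastic hM))
            offDiagIndicator_le_one _
      _ = offDiagIndicator (a, b) := by
          rw [one_vecMul_of_mem_rowStochastic (stickyCoupling_mem_rowStochastic hM)]
          simp [offDiagIndicator, hab]

lemma pow_stickyCoupling_mulVec_offDiagIndicator_le_self (hM : M ∈ rowStochastic ℝ X)
    (t : ℕ) :
    stickyCoupling M ^ t *ᵥ offDiagIndicator ≤ offDiagIndicator := by
  simpa using pow_mulVec_le_pow_smul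
    (fun _ _ => nonneg_of_mem_rowStochastic (stickyCoupling_mem_rowStochastic hM)) zero_le_one
    (by simpa using stickyCoupling_mulVec_offDiagIndicator_le hM) t

lemma pow_stickyCoupling_mulVec_offDiagIndicator_le (hM : M ∈ rowStochastic ℝ X) (t : ℕ) :
    stickyCoupling M ^ t *ᵥ offDiagIndicator ≤ (M ⊗ₖ M) ^ t *ᵥ offDiagIndicator := by
  have hP := kronecker_mem_rowStochastic hM hM
  induction t with
  | zero => simp
  | succ t ih =>
    rintro ⟨a, b⟩
    by_cases hab : a = b
    · subst hab
      refine (pow_stickyCoupling_mulVec_offDiagIndicator_le_self hM (t + 1) (a, a)).trans ?_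
      exact (offDiagIndicator_self a).trans_le
        (nonneg_mulVec_of_mem_rowStochastic (pow_mem hP _) offDiagIndicator_nonneg _)
    · rw [pow_succ', pow_succ', ← mulVec_mulVec, ← mulVec_mulVec]
      calc (stickyCoupling M *ᵥ (stickyCoupling M ^ t *ᵥ offDiagIndicator)) (a, b)
          = ((M ⊗ₖ M) *ᵥ (stickyCoupling M ^ t *ᵥ offDiagIndicator)) (a, b) := by
            simp only [mulVec, dotProduct, stickyCoupling_apply_of_ne (w := (a, b)) hab]
        _ ≤ ((M ⊗ₖ M) *ᵥ ((M ⊗ₖ M) ^ t *ᵥ offDiagIndicator)) (a, b) :=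
          mulVec_mono (fun _ _ => nonneg_of_mem_rowStochastic hP) ih _

lemma exists_pow_stickyCoupling_mulVec_offDiagIndicator_le (hM : M ∈ rowStochastic ℝ X)
    (hprim : M.IsPrimitive) : ∃ t, 0 < t ∧ ∃ c : ℝ, 0 ≤ c ∧ c < 1 ∧
      stickyCoupling M ^ t *ᵥ offDiagIndicator ≤ c • offDiagIndicator := by
  obtain ⟨t, ht, hpos⟩ := hprim.exists_pos_pow
  have hP : (M ⊗ₖ M) ^ t ∈ rowStochastic ℝ (X × X) :=
    pow_mem (kronecker_mem_rowStochastic hM hM) t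
  have hlt : ∀ w, ((M ⊗ₖ M) ^ t *ᵥ offDiagIndicator) w < 1 := by
    intro w
    calc ((M ⊗ₖ M) ^ t *ᵥ offDiagIndicator) w < ((M ⊗ₖ M) ^ t *ᵥ 1) w := by
          refine Finset.sum_lt_sum (fun z _ => mul_le_mul_of_nonneg_left
            (offDiagIndicator_le_one z) (nonneg_of_mem_rowStochastic hP))
            ⟨(w.1, w.1), Finset.mem_univ _, ?_⟩
          simp [offDiagIndicator, kronecker_pow, hpos]
      _ = 1 := by rw [one_vecMul_of_mem_rowStochastic hP, Pi.one_apply]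
  obtain ⟨c, hc0, hc1, hc⟩ := exists_forall_le_of_forall_lt zero_lt_one hlt
  refine ⟨t, ht, c, hc0, hc1, fun w => ?_⟩
  by_cases hw : w.1 = w.2
  · simpa [offDiagIndicator, hw] using pow_stickyCoupling_mulVec_offDiagIndicator_le_self hM t w
  · simpa [offDiagIndicator, hw] using
      (pow_stickyCoupling_mulVec_offDiagIndicator_le hM t w).trans (hc w)

end StickyCoupling

section WLDistance

variable {X Y : Type*} [Fintype X] [Fintype Y]

lemma isCoupling_mul {α : X → ℝ} {β : Y → ℝ} (hα : IsProb α) (hβ : IsProb β) :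
    IsCoupling (fun z => α z.1 * β z.2) α β :=
  ⟨fun z => mul_nonneg (hα.1 z.1) (hβ.1 z.2), fun x => by simp [← Finset.mul_sum, hβ.2],
    fun y => by simp [← Finset.sum_mul, hα.2]⟩

lemma lawAux_const [DecidableEq X] [DecidableEq Y] (ν : X × Y → ℝ)
    (K : Matrix (X × Y) (X × Y) ℝ) (t : ℕ) : lawAux ν (fun _ => K) t = ν ᵥ* K ^ t := by
  induction t with
  | zero => simp [lawAux]
  | succ t ih =>
    rw [pow_succ, ← vecMul_vecMul, ← ih]
    funext z
    simp only [lawAux, vecMul, dotProduct, mul_comm]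

lemma MarkovCoupling.law_nonneg {MX : MarkovChain X} {MY : MarkovChain Y}
    (π : MarkovCoupling MX MY) (t : ℕ) : 0 ≤ π.law t := by
  induction t with
  | zero => exact π.init_coupling.1
  | succ t ih =>
    exact fun z => Finset.sum_nonneg fun w _ => mul_nonneg ((π.trans_coupling t w).1 z) (ih w)

lemma tsum_diracN_mul (k : ℕ) (f : ℕ → ℝ) : ∑' t, diracN k t * f t = f k := by
  rw [tsum_eq_single k fun t ht => by simp [diracN, ht]]
  simp [diracN]

variable {MX : MarkovChain X} {MY : MarkovChain Y} {C : X × Y → ℝ} {k : ℕ}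

lemma dWL_eq_iInf : dWL k MX MY C = ⨅ π : MarkovCoupling MX MY, C ⬝ᵥ π.law k := by
  simp only [dWL, dOTM, tsum_diracN_mul, dotProduct]

lemma dWL_nonneg (hC : 0 ≤ C) : 0 ≤ dWL k MX MY C := by
  rw [dWL_eq_iInf]
  exact Real.iInf_nonneg fun π => dotProduct_nonneg_of_nonneg hC (π.law_nonneg k)

lemma dWL_le (hC : 0 ≤ C) (π : MarkovCoupling MX MY) : dWL k MX MY C ≤ C ⬝ᵥ π.law k := by
  rw [dWL_eq_iInf]
  refine ciInf_le ⟨0, ?_⟩ π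
  rintro _ ⟨π, rfl⟩
  exact dotProduct_nonneg_of_nonneg hC (π.law_nonneg k)

end WLDistance

section StickyMarkovCoupling

variable {X : Type*} [Fintype X] [DecidableEq X]

lemma le_supNorm_smul_offDiagIndicator {C : X × X → ℝ} (hC : ∀ x, C (x, x) = 0) :
    C ≤ supNorm C • offDiagIndicator := by
  rintro ⟨a, b⟩
  by_cases hab : a = b
  · subst hab; simp [hC]
  · simpa [offDiagIndicator, hab, supNorm] using (le_abs_self (C (a, b))).trans
      (le_ciSup (f := fun z => |C z|) (Finite.bddAbove_range _) (a, b))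

lemma mem_rowStochastic_of_isProb {m : X → X → ℝ} (hm : ∀ x, IsProb (m x)) :
    of m ∈ rowStochastic ℝ X :=
  mem_rowStochastic_iff_sum.2 ⟨fun x y => (hm x).1 y, fun x => (hm x).2⟩

def stickyMarkovCoupling {m : X → X → ℝ} (hm : ∀ x, IsProb (m x)) {ν₁ ν₂ : X → ℝ}
    (hν₁ : IsProb ν₁) (hν₂ : IsProb ν₂) :
    MarkovCoupling (⟨m, ν₁, hm, hν₁⟩ : MarkovChain X) ⟨m, ν₂, hm, hν₂⟩ where
  init z := ν₁ z.1 * ν₂ z.2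
  trans _ := stickyCoupling (of m)
  init_coupling := isCoupling_mul hν₁ hν₂
  trans_coupling _ := isCoupling_stickyCoupling (mem_rowStochastic_of_isProb hm)

lemma dWL_le_mul_supNorm {m : X → X → ℝ} (hm : ∀ x, IsProb (m x)) {ν₁ ν₂ : X → ℝ}
    (hν₁ : IsProb ν₁) (hν₂ : IsProb ν₂) {C : X × X → ℝ} (hC : 0 ≤ C)
    (hCdiag : ∀ x, C (x, x) = 0) {k : ℕ} {r : ℝ} (hr : 0 ≤ r)
    (hk : stickyCoupling (of m) ^ k *ᵥ offDiagIndicator ≤ r • offDiagIndicator) :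
    dWL k ⟨m, ν₁, hm, hν₁⟩ ⟨m, ν₂, hm, hν₂⟩ C ≤ r * supNorm C := by
  set π := stickyMarkovCoupling hm hν₁ hν₂
  have hlaw : π.law k = π.init ᵥ* stickyCoupling (of m) ^ k := lawAux_const _ _ k
  have hinit : π.init ⬝ᵥ 1 = 1 := by
    simp [π, stickyMarkovCoupling, dotProduct, Fintype.sum_prod_type, ← Finset.mul_sum, hν₂.2,
      hν₁.2]
  have hsup : 0 ≤ supNorm C := Real.iSup_nonneg fun z => abs_nonneg (C z)
  calc dWL k _ _ C ≤ C ⬝ᵥ π.law k := dWL_le hC π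
    _ ≤ (supNorm C • offDiagIndicator) ⬝ᵥ π.law k :=
      dotProduct_le_dotProduct_of_nonneg_right (le_supNorm_smul_offDiagIndicator hCdiag)
        (π.law_nonneg k)
    _ = supNorm C * (π.init ⬝ᵥ (stickyCoupling (of m) ^ k *ᵥ offDiagIndicator)) := by
      rw [smul_dotProduct, hlaw, dotProduct_comm, ← dotProduct_mulVec, smul_eq_mul]
    _ ≤ supNorm C * (π.init ⬝ᵥ (r • 1)) := by
      refine mul_le_mul_of_nonneg_left (dotProduct_le_dotProduct_of_nonneg_left
        (hk.trans (smul_le_smul_of_nonneg_left offDiagIndicator_le_one hr)) π.init_coupling.1)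
        hsup
    _ = r * supNorm C := by rw [dotProduct_smul, hinit, smul_eq_mul, mul_one, mul_comm]

end StickyMarkovCoupling

/-- For a single irreducible aperiodic kernel `m` with pseudometric cost, the
depth-`k` WL distance between two copies of the chain with different initial
distributions decays as `(1-ε)^{⌊k/t₀⌋}·‖C‖_∞` for some `t₀ ≥ 1` and
`ε ∈ (0,1]` depending only on `m`; in particular it tends to `0`. -/
theorem stmt17 {X : Type*} [Fintype X] [DecidableEq X]
    (dX : X → X → ℝ) (hdX : IsPseudometric dX)
    (m : X → X → ℝ) (hm : ∀ x, IsProb (m x))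
    (hirr : KernelIrreducible m) (haper : KernelAperiodic m) :
    ∃ t₀ : ℕ, 1 ≤ t₀ ∧ ∃ ε : ℝ, 0 < ε ∧ ε ≤ 1 ∧
      ∀ (ν₁ ν₂ : X → ℝ) (hν₁ : IsProb ν₁) (hν₂ : IsProb ν₂),
        (∀ k : ℕ,
          dWL k (⟨m, ν₁, hm, hν₁⟩ : MarkovChain X)
              (⟨m, ν₂, hm, hν₂⟩ : MarkovChain X)
              (fun z : X × X => dX z.1 z.2) ≤
            (1 - ε) ^ (k / t₀) * supNorm (fun z : X × X => dX z.1 z.2)) ∧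
        Tendsto (fun k =>
            dWL k (⟨m, ν₁, hm, hν₁⟩ : MarkovChain X)
              (⟨m, ν₂, hm, hν₂⟩ : MarkovChain X)
              (fun z : X × X => dX z.1 z.2)) atTop (𝓝 0) := by
  have hM := mem_rowStochastic_of_isProb hm
  obtain ⟨t₀, ht₀, c, hc0, hc1, hcontract⟩ :=
    exists_pow_stickyCoupling_mulVec_offDiagIndicator_le hM
      (hirr.isPrimitive haper fun x => (hm x).1)
  have hdecay := pow_mulVec_le_pow_div_smul
    (fun _ _ => nonneg_of_mem_rowStochastic (stickyCoupling_mem_rowStochastic hM))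
    (stickyCoupling_mulVec_offDiagIndicator_le hM) hc0 hcontract
  refine ⟨t₀, ht₀, 1 - c, by linarith, by linarith, fun ν₁ ν₂ hν₁ hν₂ => ?_⟩
  simp only [sub_sub_cancel]
  have hC : 0 ≤ fun z : X × X => dX z.1 z.2 := fun z => hdX.1 z.1 z.2
  have hbound := fun k =>
    dWL_le_mul_supNorm hm hν₁ hν₂ hC hdX.2.1 (pow_nonneg hc0 (k / t₀)) (hdecay k)
  refine ⟨hbound, squeeze_zero (fun k => dWL_nonneg hC) hbound ?_⟩
  simpa using ((tendsto_pow_atTop_nhds_zero_of_lt_one hc0 hc1).comp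
    (Nat.tendsto_div_const_atTop ht₀.ne')).mul_const (supNorm fun z : X × X => dX z.1 z.2)
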